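/- If two generalized priority structures (q, ≿, t) and (q, ≿, t′) are both within-tier acyclic, then for every preference profile R, the sets of Nash equilibrium outcomes of the TDA mechanisms under t and under t′ coincide and both equal the set of stable matchings of (q, ≿, R). -/

import Mathlib

set_option linter.unusedSectionVars false

namespace SchoolChoice

/-- A strict preference over `S ∪ {self}`, encoded by an injective ranking function on
`Option S`; `none` denotes being unmatched (the student himself), and a smaller rank
means more preferred. Injective rankings on a finite set are exactly strict linear orders. -/
structure Pref (S : Type) where
  rank : Option S → ℕ
  inj : Function.Injective rank

/-- Quotas together with strict priorities of the schools: `prank s` ranks the students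
at school `s`, a smaller rank meaning higher priority. -/
structure Prio (I S : Type) where
  quota : S → ℕ
  prank : S → I → ℕ
  inj : ∀ s, Function.Injective (prank s)

variable {I S : Type} [Fintype I] [Fintype S] [DecidableEq I] [DecidableEq S]

/-- `i` has strictly higher priority than `j` at school `s`. -/
def Prio.higher (E : Prio I S) (s : S) (i j : I) : Prop :=
  E.prank s i < E.prank s j

/-- A matching assigns to each student a school or himself (`none`). -/
abbrev Matching (I S : Type) := I → Option S

/-- The set of students assigned to school `s`. -/
def assigned (μ : Matching I S) (s : S) : Finset I :=
  Finset.univ.filter (fun i => μ i = some s)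

/-- Quotas are respected. -/
def Feasible (E : Prio I S) (μ : Matching I S) : Prop :=
  ∀ s, (assigned μ s).card ≤ E.quota s

/-- `(i, s)` is a blocking pair of `μ` with respect to preferences `R`:
`i` strictly prefers `s` to his assignment, and either `s` has an empty seat
(wastefulness) or some student assigned to `s` has lower priority than `i`
(justified envy). -/
def Blocks (E : Prio I S) (R : I → Pref S) (μ : Matching I S) (i : I) (s : S) : Prop :=
  (R i).rank (some s) < (R i).rank (μ i) ∧
    ((assigned μ s).card < E.quota s ∨ ∃ j, μ j = some s ∧ E.higher s i j)

/-- Individual rationality: every student weakly prefers his assignment to being unmatched. -/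
def IndivRat (R : I → Pref S) (μ : Matching I S) : Prop :=
  ∀ i, (R i).rank (μ i) ≤ (R i).rank none

/-- Non-wastefulness: no student prefers a school with an empty seat to his assignment. -/
def NonWasteful (E : Prio I S) (R : I → Pref S) (μ : Matching I S) : Prop :=
  ∀ i s, (R i).rank (some s) < (R i).rank (μ i) → E.quota s ≤ (assigned μ s).card

/-- Stability: feasible, individually rational, and no blocking pair
(no justified envy and non-wasteful). -/
def Stable (E : Prio I S) (R : I → Pref S) (μ : Matching I S) : Prop :=
  Feasible E μ ∧ IndivRat R μ ∧ ∀ i s, ¬ Blocks E R μ i s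

/-- The student-optimal stable matching for the (reported) preferences. -/
def StudentOptimal (E : Prio I S) (R : I → Pref S) (μ : Matching I S) : Prop :=
  Stable E R μ ∧ ∀ ν, Stable E R ν → ∀ i, (R i).rank (μ i) ≤ (R i).rank (ν i)

open Classical in
/-- The student-proposing deferred acceptance mechanism: by the Gale–Shapley theorem its
outcome is the (unique) student-optimal stable matching of the reported preferences. -/
noncomputable def DA (E : Prio I S) (R : I → Pref S) : Matching I S :=
  if h : ∃ μ, StudentOptimal E R μ then h.choose else fun _ => none

/-- A strict upper bound for the values of a ranking. -/
noncomputable def bnd (p : Pref S) : ℕ := (Finset.univ.sup p.rank) + 1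

lemma rank_lt_bnd (p : Pref S) (x : Option S) : p.rank x < bnd p :=
  Nat.lt_succ_of_le (Finset.le_sup (Finset.mem_univ x))

private lemma mul_add_lt {a K B r : ℕ} (ha : a ≤ K) (hr : r < B) :
    a * B + r < (K + 1) * B := by
  calc a * B + r < a * B + B := by omega
    _ = (a + 1) * B := by ring
    _ ≤ (K + 1) * B := Nat.mul_le_mul (by omega) le_rfl

/-- Is an alternative "inside the market" `A`?  `none` always is. -/
def goodB (A : S → Prop) [DecidablePred A] : Option S → Bool
  | none => true
  | some s => decide (A s)

/-- The preference truncated to the set of schools `A`: schools in `A` (and the outside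
option `none`) keep their relative order, while all schools outside `A` are pushed below
`none` (become unacceptable), keeping their relative order among themselves. -/
noncomputable def trunc (A : S → Prop) [DecidablePred A] (p : Pref S) : Pref S where
  rank x := (if goodB A x then 0 else bnd p) + p.rank x
  inj := by
    intro x y h
    by_cases hx : goodB A x <;> by_cases hy : goodB A y <;>
      simp only [hx, hy, if_true, if_false, Bool.false_eq_true, zero_add] at h
    · exact p.inj h
    · have := rank_lt_bnd p x; omega
    · have := rank_lt_bnd p y; omega
    · exact p.inj (by omega)

/-- The reshuffled preference with respect to a tier structure `t`: acceptable schools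
are grouped by tier in increasing tier order (keeping the original relative order within
each tier) above `none`, and all unacceptable schools are placed below `none`. -/
noncomputable def reshuffle (t : S → ℕ) (p : Pref S) : Pref S where
  rank x :=
    Option.elim x ((Finset.univ.sup t + 1) * bnd p)
      (fun s =>
        if p.rank (some s) < p.rank none then t s * bnd p + p.rank (some s)
        else (Finset.univ.sup t + 1) * bnd p + 1 + p.rank (some s))
  inj := by
    have hB : ∀ x, p.rank x < bnd p := rank_lt_bnd p
    have hK : ∀ s : S, t s ≤ Finset.univ.sup t := fun s => Finset.le_sup (Finset.mem_univ s)
    intro x y h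
    rcases x with _ | s <;> rcases y with _ | s' <;>
      simp only [Option.elim_none, Option.elim_some] at h
    · rfl
    · by_cases hy : p.rank (some s') < p.rank none <;> simp only [hy, if_true, if_false] at h
      · have := mul_add_lt (hK s') (hB (some s')); omega
      · omega
    · by_cases hx : p.rank (some s) < p.rank none <;> simp only [hx, if_true, if_false] at h
      · have := mul_add_lt (hK s) (hB (some s)); omega
      · omega
    · by_cases hx : p.rank (some s) < p.rank none <;>
        by_cases hy : p.rank (some s') < p.rank none <;>
        simp only [hx, hy, if_true, if_false] at h
      · have hts : t s = t s' := by
          rcases Nat.lt_trichotomy (t s) (t s') with h1 | h1 | h1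
          · have h2 : t s * bnd p + p.rank (some s) < t s' * bnd p + p.rank (some s') := by
              have h3 := mul_add_lt (a := t s) (K := t s' - 1) (B := bnd p) (by omega) (hB (some s))
              have h4 : (t s' - 1 + 1) * bnd p = t s' * bnd p := by congr 1; omega
              omega
            omega
          · exact h1
          · have h2 : t s' * bnd p + p.rank (some s') < t s * bnd p + p.rank (some s) := by
              have h3 := mul_add_lt (a := t s') (K := t s - 1) (B := bnd p) (by omega) (hB (some s'))
              have h4 : (t s - 1 + 1) * bnd p = t s * bnd p := by congr 1; omega
              omega
            omega
        rw [hts] at h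
        exact p.inj (by omega)
      · have := mul_add_lt (hK s) (hB (some s)); omega
      · have := mul_add_lt (hK s') (hB (some s')); omega
      · exact p.inj (by omega)

/-- A tier structure assigning each school a tier in `{1, …, T}`, each tier nonempty. -/
def IsTierStructure (t : S → ℕ) (T : ℕ) : Prop :=
  (∀ s, 1 ≤ t s ∧ t s ≤ T) ∧ ∀ k, 1 ≤ k → k ≤ T → ∃ s, t s = k

/-- Rounds `1, …, k` of the tiered deferred acceptance mechanism: in round `k` the
students left unmatched so far participate in the DA mechanism with their preferences
truncated to the tier-`k` schools (already matched students participate with nothing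
acceptable); students matched in earlier rounds keep their assignments. -/
noncomputable def TDAaux (E : Prio I S) (t : S → ℕ) (Q : I → Pref S) : ℕ → Matching I S
  | 0 => fun _ => none
  | k + 1 => fun i =>
      match TDAaux E t Q k i with
      | some s => some s
      | none =>
          DA E (fun j =>
            if TDAaux E t Q k j = none then trunc (fun s => t s = k + 1) (Q j)
            else trunc (fun _ => False) (Q j)) i

/-- The tiered deferred acceptance mechanism under tier structure `t`. -/
noncomputable def TDA (E : Prio I S) (t : S → ℕ) (Q : I → Pref S) : Matching I S :=
  TDAaux E t Q (Finset.univ.sup t)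

/-- `Q` is a (pure) Nash equilibrium of the preference revelation game induced by the
mechanism `f` when the true preferences are `R`: no student can obtain a school he truly
strictly prefers by unilaterally changing his report. -/
def NashEq (R : I → Pref S) (f : (I → Pref S) → Matching I S) (Q : I → Pref S) : Prop :=
  ∀ (i : I) (Qi' : Pref S),
    (R i).rank (f Q i) ≤ (R i).rank (f (Function.update Q i Qi') i)

/-- `μ` is a Nash equilibrium outcome of the revelation game induced by `f` at true
preferences `R`. -/
def NashOutcome (R : I → Pref S) (f : (I → Pref S) → Matching I S) (μ : Matching I S) : Prop :=
  ∃ Q, NashEq R f Q ∧ f Q = μ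

/-- The preference `p` is aligned with the tier structure `t`: a (weakly) more preferred
school always lies in a weakly earlier tier. -/
def AlignedPref (t : S → ℕ) (p : Pref S) : Prop :=
  ∀ s s' : S, p.rank (some s) ≤ p.rank (some s') → t s ≤ t s'

/-- `p` lists exactly the school in `o` (if any) as acceptable. -/
def OnlyAcceptable (p : Pref S) (o : Option S) : Prop :=
  ∀ s : S, (p.rank (some s) < p.rank none ↔ o = some s)

/-- An Ergin cycle of the priority structure among the schools in `A`. -/
def Cycle (E : Prio I S) (A : S → Prop) : Prop :=
  ∃ a b : S, A a ∧ A b ∧ a ≠ b ∧ ∃ i j k : I,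
    E.higher a i j ∧ E.higher a j k ∧ E.higher b k i ∧
    ∃ Ia Ib : Finset I, Disjoint Ia Ib ∧
      (∀ l ∈ Ia, l ≠ i ∧ l ≠ j ∧ l ≠ k ∧ E.higher a l j) ∧
      (∀ l ∈ Ib, l ≠ i ∧ l ≠ j ∧ l ≠ k ∧ E.higher b l i) ∧
      Ia.card = E.quota a - 1 ∧ Ib.card = E.quota b - 1

/-- Within-tier acyclicity of a generalized priority structure: no Ergin cycle among the
schools of any single tier. -/
def WithinTierAcyclic (E : Prio I S) (t : S → ℕ) : Prop :=
  ∀ k : ℕ, ¬ Cycle E (fun s => t s = k)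

/-- The (strict) preference `pr` of school `s` over sets of students is a responsive
extension of its priorities. -/
def Responsive (E : Prio I S) (s : S) (pr : Finset I → Finset I → Prop) : Prop :=
  ∀ (J : Finset I) (i j : I), i ∉ J → j ∉ J → E.higher s i j →
    pr (insert i J) (insert j J)

/-- `t` is a refinement of `t'`: `t'` ranks `a` in a strictly later tier than `b` only
if `t` does. -/
def Refines (t t' : S → ℕ) : Prop :=
  ∀ a b : S, t' b < t' a → t b < t a

/-!
A stable matching `μ` is the outcome of the profile in which every student lists only his
`μ`-school: each round of TDA then gives everybody his favourite option, and a student who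
deviates to a school `s` he prefers pushes out a student of `μ(s)` who is still in the market,
lists `s` and, by stability, has priority over him.

Conversely, suppose `i` blocks the outcome of an equilibrium `Q` with a school `s` of tier
`r + 1`. If `i` lists only `s`, he stays unmatched, so in round `r + 1` the school `s` is
filled with students of higher priority than `i`. Within-tier acyclicity lets us remove `i`
from that round without changing this: a student of lower priority admitted instead would
close an Ergin cycle along the chain of students displaced by the absence of `i`. Up to round
`r` the deviation only removes `i` from the market, which by the comparative statics of
deferred acceptance leaves everyone else weakly better off; so the round-`(r + 1)` market of
`Q` arises from the one without `i` by giving back their lists to some students, which again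
keeps `s` filled above `i`, contradicting the blocking pair.

As `DA` is defined as the student-optimal stable matching, its existence and comparative
statics come from running the algorithm.
-/

lemma _root_.Function.isFixedPt_iterate_of_measure_lt {α : Type*} (f : α → α) (m : α → ℕ)
    (hm : ∀ x, f x ≠ x → m (f x) < m x) (x : α) : Function.IsFixedPt f (f^[m x] x) := by
  have key : ∀ n, f (f^[n] x) = f^[n] x ∨ m (f^[n] x) + n ≤ m x := by
    intro n
    induction n with
    | zero => exact Or.inr le_rfl
    | succ n ih =>
      rw [Function.iterate_succ_apply']
      by_cases hfix : f (f^[n] x) = f^[n] x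
      · exact Or.inl (by rw [hfix, hfix])
      · have := hm _ hfix
        exact Or.inr (by have := ih.resolve_left hfix; omega)
  rcases key (m x) with h | h
  · exact h
  · by_contra hfix
    have := hm _ hfix
    omega

lemma Pref.rank_lt_of_le_of_ne {p : Pref S} {x y : Option S} (h : p.rank x ≤ p.rank y)
    (hne : x ≠ y) : p.rank x < p.rank y :=
  lt_of_le_of_ne h (fun h => hne (p.inj h))

def Pref.Acceptable (p : Pref S) (s : S) : Prop := p.rank (some s) < p.rank none

def NothingAcceptable (p : Pref S) : Prop := ∀ s, ¬ p.Acceptable s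

def Emptying (P P₀ : I → Pref S) : Prop := ∀ j, P j = P₀ j ∨ NothingAcceptable (P j)

lemma Emptying.refl (P : I → Pref S) : Emptying P P := fun _ => Or.inl rfl

lemma Prio.higher_of_not_higher (E : Prio I S) {s : S} {x y : I} (hxy : x ≠ y)
    (h : ¬ E.higher s x y) : E.higher s y x :=
  lt_of_le_of_ne (not_lt.1 h) (fun h => hxy (E.inj s h).symm)

lemma Prio.higher_trans (E : Prio I S) {s : S} {x y z : I} (hxy : E.higher s x y)
    (hyz : E.higher s y z) : E.higher s x z :=
  lt_trans hxy hyz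

@[simp]
lemma mem_assigned {μ : Matching I S} {s : S} {i : I} : i ∈ assigned μ s ↔ μ i = some s := by
  simp [assigned]

lemma disjoint_assigned (μ : Matching I S) {x y : S} (hxy : x ≠ y) :
    Disjoint (assigned μ x) (assigned μ y) :=
  Finset.disjoint_left.2 fun _ hx hy => hxy (Option.some.inj ((mem_assigned.1 hx).symm.trans
    (mem_assigned.1 hy)))

lemma card_biUnion_assigned (μ : Matching I S) (X : Finset S) :
    (X.biUnion (assigned μ)).card = ∑ x ∈ X, (assigned μ x).card :=
  Finset.card_biUnion fun _ _ _ _ hxy => disjoint_assigned μ hxy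

def FilledBy (E : Prio I S) (μ : Matching I S) (s : S) (H : I → Prop) : Prop :=
  (assigned μ s).card = E.quota s ∧ ∀ j ∈ assigned μ s, H j

lemma FilledBy.mono {E : Prio I S} {μ : Matching I S} {s : S} {H H' : I → Prop}
    (h : FilledBy E μ s H) (hH : ∀ j, H j → H' j) : FilledBy E μ s H' :=
  ⟨h.1, fun j hj => hH j (h.2 j hj)⟩

section Stability

variable {E : Prio I S} {P : I → Pref S} {μ : Matching I S}

lemma Stable.acceptable_of_eq_some (hμ : Stable E P μ) {j : I} {s : S} (hj : μ j = some s) :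
    (P j).Acceptable s :=
  Pref.rank_lt_of_le_of_ne (hj ▸ hμ.2.1 j) (by simp)

lemma Stable.eq_none_of_nothingAcceptable (hμ : Stable E P μ) {j : I}
    (hj : NothingAcceptable (P j)) : μ j = none := by
  cases h : μ j with
  | none => rfl
  | some s => exact absurd (hμ.acceptable_of_eq_some h) (hj s)

lemma Stable.filledBy_of_prefers (hμ : Stable E P μ) {i : I} {s : S}
    (h : (P i).rank (some s) < (P i).rank (μ i)) : FilledBy E μ s (E.higher s · i) := by
  refine ⟨le_antisymm (hμ.1 s) (not_lt.1 fun hlt => hμ.2.2 i s ⟨h, Or.inl hlt⟩), ?_⟩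
  intro j hj
  have hji : j ≠ i := by rintro rfl; simp_all
  exact E.higher_of_not_higher hji.symm fun hij =>
    hμ.2.2 i s ⟨h, Or.inr ⟨j, mem_assigned.1 hj, hij⟩⟩

lemma Stable.update_nothingAcceptable (hμ : Stable E P μ) {i : I} (hi : μ i = none)
    {p : Pref S} (hp : NothingAcceptable p) : Stable E (Function.update P i p) μ := by
  refine ⟨hμ.1, fun j => ?_, fun j s ⟨hpref, hs⟩ => ?_⟩
  · rcases eq_or_ne j i with rfl | hj
    · simp [hi]
    · simpa [hj] using hμ.2.1 j
  · rcases eq_or_ne j i with rfl | hj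
    · simp only [Function.update_self, hi] at hpref
      exact hp s hpref
    · exact hμ.2.2 j s ⟨by simpa [hj] using hpref, hs⟩

end Stability

section DeferredAcceptance

noncomputable def best (p : Pref S) (D : Finset (Option S)) : Option S :=
  if h : D.Nonempty then (D.exists_min_image p.rank h).choose else none

lemma best_mem (p : Pref S) {D : Finset (Option S)} (h : D.Nonempty) : best p D ∈ D := by
  rw [best, dif_pos h]
  exact (D.exists_min_image p.rank h).choose_spec.1

lemma best_le (p : Pref S) {D : Finset (Option S)} {x : Option S} (hx : x ∈ D) :
    p.rank (best p D) ≤ p.rank x := by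
  rw [best, dif_pos ⟨x, hx⟩]
  exact (D.exists_min_image p.rank ⟨x, hx⟩).choose_spec.2 x hx

lemma some_mem_of_best_eq {p : Pref S} {D : Finset (Option S)} {s : S}
    (h : best p D = some s) : some s ∈ D := by
  by_cases hD : D.Nonempty
  · exact h ▸ best_mem p hD
  · simp [best, hD] at h

variable (E : Prio I S)

def beats (s : S) (X : Finset I) (j : I) : ℕ :=
  (X.filter fun k => E.prank s k < E.prank s j).card

section Beats

variable {E} {s : S} {X : Finset I}

lemma beats_lt_beats {j k : I} (hj : j ∈ X) (h : E.higher s j k) :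
    beats E s X j < beats E s X k := by
  refine Finset.card_lt_card ⟨fun l hl => ?_, fun hsub => ?_⟩
  · simp only [Finset.mem_filter] at hl ⊢
    exact ⟨hl.1, hl.2.trans h⟩
  · simpa using (Finset.mem_filter.1 (hsub (Finset.mem_filter.2 ⟨hj, h⟩))).2

lemma higher_of_beats_lt {j k : I} (hk : beats E s X k < E.quota s)
    (hj : E.quota s ≤ beats E s X j) : E.higher s k j := by
  by_contra h
  refine absurd (hj.trans (Finset.card_le_card fun l hl => ?_)) (not_le.2 hk)
  simp only [Finset.mem_filter] at hl ⊢
  exact ⟨hl.1, hl.2.trans_le (not_lt.1 h)⟩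

lemma beats_injOn : Set.InjOn (beats E s X) X := by
  intro j hj k hk hjk
  by_contra hne
  rcases lt_or_gt_of_ne fun h => hne (E.inj s h) with h | h
  · exact (beats_lt_beats hj h).ne hjk
  · exact (beats_lt_beats hk h).ne hjk.symm

lemma beats_lt_card {j : I} (hj : j ∈ X) : beats E s X j < X.card :=
  Finset.card_lt_card (Finset.filter_ssubset.2 ⟨j, hj, lt_irrefl _⟩)

lemma image_beats : X.image (beats E s X) = Finset.range X.card :=
  Finset.eq_of_subset_of_card_le
    (fun v hv => by
      obtain ⟨j, hj, rfl⟩ := Finset.mem_image.1 hv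
      exact Finset.mem_range.2 (beats_lt_card hj))
    (by rw [Finset.card_range, Finset.card_image_of_injOn beats_injOn])

lemma card_filter_beats_lt (q : ℕ) :
    (X.filter (beats E s X · < q)).card = min X.card q := by
  rw [← Finset.card_image_of_injOn (f := beats E s X)
      (beats_injOn.mono (Finset.filter_subset _ _)),
    ← Finset.filter_image (p := (· < q)), image_beats, ← Finset.card_range (min X.card q)]
  congr 1
  ext v
  simp

end Beats

variable (P : I → Pref S)

/-- A state of the algorithm: the schools (and `none`) that have not yet rejected each
student. -/
abbrev Menus (I S : Type) := I → Finset (Option S)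

noncomputable def proposal (D : Menus I S) (i : I) : Option S := best (P i) (D i)

noncomputable def proposers (D : Menus I S) (s : S) : Finset I :=
  Finset.univ.filter (proposal P D · = some s)

noncomputable def keptProposers (D : Menus I S) (s : S) : Finset I :=
  (proposers P D s).filter (beats E s (proposers P D s) · < E.quota s)

/-- Each school keeps its `quota` highest-priority proposers and rejects the others. -/
noncomputable def rejectStep (D : Menus I S) : Menus I S := fun i =>
  (D i).filter fun x => ∀ s, x = some s → proposal P D i = some s →
    beats E s (proposers P D s) i < E.quota s

variable {E P}

lemma mem_proposers {D : Menus I S} {s : S} {i : I} :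
    i ∈ proposers P D s ↔ proposal P D i = some s := by
  simp [proposers]

lemma rejectStep_subset (D : Menus I S) (i : I) : rejectStep E P D i ⊆ D i :=
  Finset.filter_subset _ _

lemma exists_rejected_of_notMem_rejectStep {D : Menus I S} {i : I} {x : Option S}
    (hx : x ∈ D i) (hx' : x ∉ rejectStep E P D i) :
    ∃ s, x = some s ∧ proposal P D i = some s ∧
      E.quota s ≤ beats E s (proposers P D s) i := by
  simp only [rejectStep, Finset.mem_filter, not_and, not_forall, not_lt] at hx'
  obtain ⟨s, hxs, hprop, hq⟩ := hx' hx
  exact ⟨s, hxs, hprop, hq⟩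

lemma none_mem_rejectStep {D : Menus I S} {i : I} (h : none ∈ D i) :
    none ∈ rejectStep E P D i :=
  Finset.mem_filter.2 ⟨h, by simp⟩

lemma rejectStep_eq_of_kept {D : Menus I S} {j : I} {s : S} (hj : j ∈ keptProposers E P D s) :
    rejectStep E P D j = D j := by
  simp only [keptProposers, Finset.mem_filter, mem_proposers] at hj
  refine Finset.filter_true_of_mem fun x _ s' hxs' hprop => ?_
  cases Option.some.inj (hj.1.symm.trans hprop)
  exact hj.2

lemma keptProposers_subset (D : Menus I S) (s : S) :
    keptProposers E P D s ⊆ proposers P (rejectStep E P D) s := by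
  intro j hj
  have hprop := mem_proposers.1 (Finset.mem_filter.1 hj).1
  rw [mem_proposers, proposal, rejectStep_eq_of_kept hj]
  exact hprop

lemma quota_le_card_keptProposers {D : Menus I S} {s : S} {i : I}
    (h : E.quota s ≤ beats E s (proposers P D s) i) :
    E.quota s ≤ (keptProposers E P D s).card := by
  have : E.quota s ≤ (proposers P D s).card :=
    h.trans (Finset.card_le_card (Finset.filter_subset _ _))
  rw [keptProposers, card_filter_beats_lt]
  omega

lemma higher_of_mem_keptProposers {D : Menus I S} {s : S} {i j : I}
    (h : E.quota s ≤ beats E s (proposers P D s) i) (hj : j ∈ keptProposers E P D s) :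
    E.higher s j i :=
  higher_of_beats_lt (Finset.mem_filter.1 hj).2 h

variable (E P)

def RejectionsJustified (D : Menus I S) : Prop :=
  ∀ i s, some s ∉ D i → E.quota s ≤ beats E s (proposers P D s) i

lemma RejectionsJustified.rejectStep {D : Menus I S} (hD : RejectionsJustified E P D) :
    RejectionsJustified E P (rejectStep E P D) := by
  intro i s hs
  have hold : E.quota s ≤ beats E s (proposers P D s) i := by
    by_cases hmem : some s ∈ D i
    · obtain ⟨s', hss', -, hq⟩ := exists_rejected_of_notMem_rejectStep hmem hs
      cases Option.some.inj hss'
      exact hq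
    · exact hD i s hmem
  refine (quota_le_card_keptProposers hold).trans (Finset.card_le_card fun j hj => ?_)
  exact Finset.mem_filter.2 ⟨keptProposers_subset D s hj, higher_of_mem_keptProposers hold hj⟩

def Retains (P₀ : I → Pref S) (ν : Matching I S) (D : Menus I S) : Prop :=
  (∀ j, none ∈ D j) ∧ ∀ j, P j = P₀ j → ν j ∈ D j

variable {E P}

/-- A student rejected by his `ν`-partner `s` leaves `quota s` kept proposers above him, one
of which is not matched to `s` by `ν` and therefore blocks `ν`. -/
lemma Retains.rejectStep {P₀ : I → Pref S} (hP : Emptying P P₀) {ν : Matching I S}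
    (hν : Stable E P₀ ν) {D : Menus I S} (hD : Retains P P₀ ν D) :
    Retains P P₀ ν (rejectStep E P D) := by
  refine ⟨fun j => none_mem_rejectStep (hD.1 j), fun j hj => ?_⟩
  by_contra hnmem
  obtain ⟨s, hνj, hprop, hq⟩ := exists_rejected_of_notMem_rejectStep (hD.2 j hj) hnmem
  have hjs : j ∈ assigned ν s := mem_assigned.2 hνj
  obtain ⟨k, hk, hkν⟩ : ∃ k ∈ keptProposers E P D s, k ∉ assigned ν s := by
    by_contra! hsub
    have hj_kept : j ∉ keptProposers E P D s := fun h =>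
      lt_irrefl _ (higher_of_mem_keptProposers hq h)
    have := Finset.card_le_card (show keptProposers E P D s ⊆ (assigned ν s).erase j from
      fun k hk => Finset.mem_erase.2 ⟨fun h => hj_kept (h ▸ hk), hsub k hk⟩)
    rw [Finset.card_erase_of_mem hjs] at this
    have := quota_le_card_keptProposers hq
    have := hν.1 s
    have := Finset.card_pos.2 ⟨j, hjs⟩
    omega
  have hkprop : best (P k) (D k) = some s := mem_proposers.1 (Finset.mem_filter.1 hk).1
  have hkP : P k = P₀ k := (hP k).resolve_right fun hk' => by
    have := best_le (P k) (hD.1 k)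
    rw [hkprop] at this
    exact hk' s (Pref.rank_lt_of_le_of_ne this (by simp))
  have hpref : (P₀ k).rank (some s) < (P₀ k).rank (ν k) := by
    rw [← hkP, ← hkprop]
    exact Pref.rank_lt_of_le_of_ne (best_le _ (hD.2 k hkP))
      (by rw [hkprop]; exact fun h => hkν (mem_assigned.2 h.symm))
  exact hν.2.2 k s ⟨hpref, Or.inr ⟨j, hνj, higher_of_mem_keptProposers hq hk⟩⟩

end DeferredAcceptance

section GaleShapley

variable (E : Prio I S) (P : I → Pref S)

def menuSize (D : Menus I S) : ℕ := ∑ i, (D i).card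

variable {E P} in
lemma menuSize_rejectStep_lt {D : Menus I S} (h : rejectStep E P D ≠ D) :
    menuSize (rejectStep E P D) < menuSize D := by
  obtain ⟨i, hi⟩ := Function.ne_iff.1 h
  exact Finset.sum_lt_sum (fun j _ => Finset.card_le_card (rejectStep_subset D j))
    ⟨i, Finset.mem_univ _, Finset.card_lt_card (Finset.ssubset_iff_subset_ne.2
      ⟨rejectStep_subset D i, hi⟩)⟩

noncomputable def finalMenus : Menus I S :=
  (rejectStep E P)^[menuSize fun _ : I => (Finset.univ : Finset (Option S))] fun _ => Finset.univ

lemma isFixedPt_finalMenus : Function.IsFixedPt (rejectStep E P) (finalMenus E P) :=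
  Function.isFixedPt_iterate_of_measure_lt _ menuSize (fun _ => menuSize_rejectStep_lt) _

lemma finalMenus_induction (p : Menus I S → Prop) (h0 : p fun _ => Finset.univ)
    (hstep : ∀ D, p D → p (rejectStep E P D)) : p (finalMenus E P) :=
  Function.Iterate.rec p h0 hstep _

variable {E P} in
lemma beats_lt_quota_of_isFixedPt {D : Menus I S} (hD : Function.IsFixedPt (rejectStep E P) D)
    {i : I} {s : S} (h : proposal P D i = some s) :
    beats E s (proposers P D s) i < E.quota s := by
  have hmem : some s ∈ rejectStep E P D i := by
    rw [hD]
    exact some_mem_of_best_eq h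
  exact (Finset.mem_filter.1 hmem).2 s rfl h

noncomputable def daMatching : Matching I S := proposal P (finalMenus E P)

lemma assigned_daMatching (s : S) :
    assigned (daMatching E P) s = proposers P (finalMenus E P) s := by
  ext
  simp [daMatching, mem_proposers]

lemma feasible_daMatching : Feasible E (daMatching E P) := by
  intro s
  have h := card_filter_beats_lt (E := E) (s := s) (X := proposers P (finalMenus E P) s)
    (E.quota s)
  rw [Finset.filter_true_of_mem fun j hj =>
    beats_lt_quota_of_isFixedPt (isFixedPt_finalMenus E P) (mem_proposers.1 hj)] at h
  rw [assigned_daMatching]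
  omega

lemma stable_daMatching : Stable E P (daMatching E P) := by
  have hnone : ∀ i, none ∈ finalMenus E P i :=
    finalMenus_induction E P (fun D => ∀ i, none ∈ D i) (fun _ => Finset.mem_univ _)
      fun _ hD i => none_mem_rejectStep (hD i)
  refine ⟨feasible_daMatching E P, fun i => best_le _ (hnone i), ?_⟩
  rintro i s ⟨hpref, hs⟩
  have hq : E.quota s ≤ beats E s (assigned (daMatching E P) s) i := by
    rw [assigned_daMatching]
    refine finalMenus_induction E P (RejectionsJustified E P)
      (fun _ _ h => absurd (Finset.mem_univ _) h) (fun _ hD => hD.rejectStep) i s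
      fun hm => absurd (best_le _ hm) (not_le.2 hpref)
  rcases hs with hlt | ⟨j, hj, hij⟩
  · exact absurd (hq.trans (Finset.card_le_card (Finset.filter_subset _ _))) (not_le.2 hlt)
  · -- at least `quota s` of the at most `quota s` students at `s` are above `i`
    have hall := Finset.eq_of_subset_of_card_le (Finset.filter_subset _ _)
      (hq.trans' (feasible_daMatching E P s))
    have hji := (Finset.mem_filter.1 (hall ▸ mem_assigned.2 hj)).2
    exact lt_asymm hji hij

variable {E P}

lemma rank_daMatching_le_of_emptying {P₀ : I → Pref S} (hP : Emptying P P₀)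
    {ν : Matching I S} (hν : Stable E P₀ ν) {j : I} (hj : P j = P₀ j) :
    (P j).rank (daMatching E P j) ≤ (P j).rank (ν j) :=
  best_le _ ((finalMenus_induction E P (Retains P P₀ ν)
    ⟨fun _ => Finset.mem_univ _, fun _ _ => Finset.mem_univ _⟩
    fun _ hD => hD.rejectStep hP hν).2 j hj)

lemma StudentOptimal.unique {μ ν : Matching I S} (hμ : StudentOptimal E P μ)
    (hν : StudentOptimal E P ν) : μ = ν :=
  funext fun j => (P j).inj (le_antisymm (hμ.2 ν hν.1 j) (hν.2 μ hμ.1 j))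

lemma studentOptimal_daMatching : StudentOptimal E P (daMatching E P) :=
  ⟨stable_daMatching E P, fun _ hν _ =>
    rank_daMatching_le_of_emptying (Emptying.refl P) hν rfl⟩

variable (E P)

lemma DA_studentOptimal : StudentOptimal E P (DA E P) := by
  have hex : ∃ μ, StudentOptimal E P μ := ⟨_, studentOptimal_daMatching⟩
  rw [DA, dif_pos hex]
  exact hex.choose_spec

lemma DA_stable : Stable E P (DA E P) := (DA_studentOptimal E P).1

variable {E P}

lemma rank_DA_le_of_emptying {P₀ : I → Pref S} (hP : Emptying P P₀) {ν : Matching I S}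
    (hν : Stable E P₀ ν) {j : I} (hj : P j = P₀ j) :
    (P₀ j).rank (DA E P j) ≤ (P₀ j).rank (ν j) := by
  rw [(DA_studentOptimal E P).unique studentOptimal_daMatching, ← hj]
  exact rank_daMatching_le_of_emptying hP hν hj

end GaleShapley

section Comparisons

variable {E : Prio I S} {P : I → Pref S} {ν ω : Matching I S}

lemma exists_eq_some_of_rank_le (hν : Stable E P ν) {j : I} {x : S}
    (hle : (P j).rank (ω j) ≤ (P j).rank (ν j)) (hj : ν j = some x) :
    ∃ y, ω j = some y := by
  cases hωj : ω j with
  | none =>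
    rw [hωj, hj] at hle
    exact absurd hle (not_le.2 (hν.acceptable_of_eq_some hj))
  | some y => exact ⟨y, rfl⟩

/-- `ω` cannot fill a school more than `ν` without `ν` being wasteful, and it matches
everybody `ν` matches. -/
lemma card_assigned_eq_of_rank_le (hν : Stable E P ν) (hω : Feasible E ω)
    (hle : ∀ j, (P j).rank (ω j) ≤ (P j).rank (ν j)) (x : S) :
    (assigned ω x).card = (assigned ν x).card := by
  have hle_card : ∀ x, (assigned ω x).card ≤ (assigned ν x).card := by
    intro x
    by_contra! hlt
    obtain ⟨m, hm, hmν⟩ := Finset.exists_mem_notMem_of_card_lt_card hlt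
    have hpref : (P m).rank (some x) < (P m).rank (ν m) := by
      rw [← mem_assigned.1 hm]
      exact Pref.rank_lt_of_le_of_ne (hle m)
        fun h => hmν (mem_assigned.2 (h.symm.trans (mem_assigned.1 hm)))
    exact hν.2.2 m x ⟨hpref, Or.inl (hlt.trans_le (hω x))⟩
  have hmatched : Finset.univ.biUnion (assigned ν) ⊆ Finset.univ.biUnion (assigned ω) := by
    intro j hj
    obtain ⟨x, -, hjx⟩ := Finset.mem_biUnion.1 hj
    obtain ⟨y, hy⟩ := exists_eq_some_of_rank_le hν (hle j) (mem_assigned.1 hjx)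
    exact Finset.mem_biUnion.2 ⟨y, Finset.mem_univ _, mem_assigned.2 hy⟩
  have hsum := Finset.card_le_card hmatched
  rw [card_biUnion_assigned, card_biUnion_assigned] at hsum
  exact (Finset.sum_eq_sum_iff_of_le fun x _ => hle_card x).1
    (le_antisymm (Finset.sum_le_sum fun x _ => hle_card x) hsum) x (Finset.mem_univ x)

lemma biUnion_assigned_eq_of_closed (hcard : ∀ x, (assigned ω x).card = (assigned ν x).card)
    {X : Finset S} (hX : ∀ j x, x ∈ X → ν j = some x → ∃ y ∈ X, ω j = some y) :
    X.biUnion (assigned ω) = X.biUnion (assigned ν) := by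
  refine (Finset.eq_of_subset_of_card_le (fun j hj => ?_) ?_).symm
  · obtain ⟨x, hx, hjx⟩ := Finset.mem_biUnion.1 hj
    obtain ⟨y, hy, hωj⟩ := hX j x hx (mem_assigned.1 hjx)
    exact Finset.mem_biUnion.2 ⟨y, hy, mem_assigned.2 hωj⟩
  · rw [card_biUnion_assigned, card_biUnion_assigned]
    exact (Finset.sum_congr rfl fun x _ => hcard x).le

lemma filledBy_of_mem_assigned_DA_emptying {π : I → Pref S} (hπ : Emptying π P)
    (hν : Stable E P ν) {m : I} {s : S} (hm : m ∈ assigned (DA E π) s)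
    (hmν : m ∉ assigned ν s) : FilledBy E ν s (E.higher s · m) := by
  have hDAm := mem_assigned.1 hm
  have hπm : π m = P m := (hπ m).resolve_right fun h => by
    simp [(DA_stable E π).eq_none_of_nothingAcceptable h] at hDAm
  have hcs := rank_DA_le_of_emptying hπ hν hπm
  rw [hDAm] at hcs
  exact hν.filledBy_of_prefers
    (Pref.rank_lt_of_le_of_ne hcs fun h => hmν (mem_assigned.2 h.symm))

lemma FilledBy.DA_of_emptying {π : I → Pref S} (hπ : Emptying π P) {s : S} {i : I}
    (h : FilledBy E (DA E π) s (E.higher s · i)) : FilledBy E (DA E P) s (E.higher s · i) := by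
  by_cases hsub : assigned (DA E π) s ⊆ assigned (DA E P) s
  · rw [FilledBy, ← Finset.eq_of_subset_of_card_le hsub (h.1 ▸ (DA_stable E P).1 s)]
    exact h
  · obtain ⟨m, hm, hmν⟩ := Finset.not_subset.1 hsub
    exact (filledBy_of_mem_assigned_DA_emptying hπ (DA_stable E P) hm hmν).mono
      fun j hj => E.higher_trans hj (h.2 m hm)

end Comparisons

section ErginCycles

variable {E : Prio I S} {A : S → Prop}

lemma cycle_of_filledBy {ν : Matching I S} {s y : S} (hsA : A s) (hyA : A y) (hsy : s ≠ y)
    {X i z : I} (hXi : E.higher s X i) (hiz : E.higher s i z) (hzX : E.higher y z X)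
    (hs : FilledBy E ν s (E.higher s · i)) (hy : FilledBy E ν y (E.higher y · X))
    (hz : ν z = some y) (hX : ν X ≠ some y) (hi : ν i = none) : Cycle E A := by
  obtain ⟨Ia, hIa, hIa_card⟩ :=
    Finset.exists_subset_card_eq ((assigned ν s).pred_card_le_card_erase (a := X))
  have hIa_s : Ia ⊆ assigned ν s := hIa.trans (Finset.erase_subset _ _)
  refine ⟨s, y, hsA, hyA, hsy, X, i, z, hXi, hiz, hzX, Ia, (assigned ν y).erase z,
    (disjoint_assigned ν hsy).mono hIa_s (Finset.erase_subset _ _), fun l hl => ?_,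
    fun l hl => ?_, by rw [hIa_card, hs.1],
    by rw [Finset.card_erase_of_mem (mem_assigned.2 hz), hy.1]⟩
  · have hls := mem_assigned.1 (hIa_s hl)
    refine ⟨(Finset.mem_erase.1 (hIa hl)).1, fun h => by simp_all, fun h => by simp_all,
      hs.2 l (hIa_s hl)⟩
  · obtain ⟨hlz, hly⟩ := Finset.mem_erase.1 hl
    have hly' := mem_assigned.1 hly
    exact ⟨fun h => hX (h ▸ hly'), fun h => by simp_all, hlz, hy.2 l hly⟩

/-- A student at `y` below `i` at `s` would close an Ergin cycle through `s` and `y`. -/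
lemma Stable.filledBy_of_prefers_of_filledBy (hacyc : ¬ Cycle E A) {P : I → Pref S}
    {ν : Matching I S} (hν : Stable E P ν) {i : I} (hi : ν i = none) {s : S} (hsA : A s)
    (hs : FilledBy E ν s (E.higher s · i)) {x y : S} {X : I}
    (hx : FilledBy E ν x (E.higher s · i)) (hX : ν X = some x) (hyA : A y)
    (hpref : (P X).rank (some y) < (P X).rank (some x)) :
    FilledBy E ν y (E.higher s · i) := by
  rcases eq_or_ne y s with rfl | hys
  · exact hs
  have hy := hν.filledBy_of_prefers (hX ▸ hpref)
  refine ⟨hy.1, fun z hz => ?_⟩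
  by_contra hzi
  have hz := mem_assigned.1 hz
  have hiz : i ≠ z := by rintro rfl; simp_all
  exact hacyc (cycle_of_filledBy hsA hyA hys.symm (hx.2 X (mem_assigned.2 hX))
    (E.higher_of_not_higher hiz.symm hzi) (hy.2 z (mem_assigned.2 hz)) hs hy hz
    (by rw [hX]; intro h; cases h; exact lt_irrefl _ hpref) hi)

/-- The schools reachable from `s` along students who move when `i` leaves the market are all
filled with students above `i` at `s`, and together they keep the same students, so `s` is
filled from among them. -/
lemma FilledBy.DA_update_nothingAcceptable (hacyc : ¬ Cycle E A) {P : I → Pref S}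
    (hA : ∀ j x, (P j).Acceptable x → A x) {i : I} {p : Pref S} (hp : NothingAcceptable p)
    (hi : DA E P i = none) {s : S} (hsA : A s) (hs : FilledBy E (DA E P) s (E.higher s · i)) :
    FilledBy E (DA E (Function.update P i p)) s (E.higher s · i) := by
  classical
  set π := Function.update P i p
  set ν := DA E P
  set ω := DA E π
  have hνπ : Stable E π ν := (DA_stable E P).update_nothingAcceptable hi hp
  have hle : ∀ j, (π j).rank (ω j) ≤ (π j).rank (ν j) := (DA_studentOptimal E π).2 ν hνπ
  have hcard := card_assigned_eq_of_rank_le hνπ (DA_stable E π).1 hle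
  let Reach := Relation.ReflTransGen (fun x y => ∃ X, ν X = some x ∧ ω X = some y) s
  have hreach : ∀ x, Reach x → FilledBy E ν x (E.higher s · i) := by
    intro x hx
    induction hx with
    | refl => exact hs
    | @tail x y _ hxy ih =>
      obtain ⟨X, hX, hωX⟩ := hxy
      rcases eq_or_ne y x with rfl | hyx
      · exact ih
      have hpref : (π X).rank (some y) < (π X).rank (some x) := by
        have := hle X
        rw [hX, hωX] at this
        exact Pref.rank_lt_of_le_of_ne this (by simpa using hyx)
      have hXi : X ≠ i := by rintro rfl; simp_all
      have hyA : A y := hA X y <| by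
        simpa [π, hXi, Pref.Acceptable] using hpref.trans (hνπ.acceptable_of_eq_some hX)
      exact hνπ.filledBy_of_prefers_of_filledBy hacyc hi hsA hs ih hX hyA hpref
  have heq := biUnion_assigned_eq_of_closed hcard (X := Finset.univ.filter Reach)
    fun j x hx hj => by
      obtain ⟨y, hy⟩ := exists_eq_some_of_rank_le hνπ (hle j) hj
      exact ⟨y, Finset.mem_filter.2 ⟨Finset.mem_univ _, (Finset.mem_filter.1 hx).2.tail
        ⟨j, hj, hy⟩⟩, hy⟩
  refine ⟨(hcard s).trans hs.1, fun l hl => ?_⟩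
  have hl' : l ∈ (Finset.univ.filter Reach).biUnion (assigned ν) :=
    heq ▸ Finset.mem_biUnion.2 ⟨s, Finset.mem_filter.2 ⟨Finset.mem_univ _, .refl⟩, hl⟩
  obtain ⟨x, hx, hlx⟩ := Finset.mem_biUnion.1 hl'
  exact (hreach x (Finset.mem_filter.1 hx).2).2 l hlx

end ErginCycles

section Preferences

def Pref.IsBest (p : Pref S) (o : Option S) : Prop := ∀ x, p.rank o ≤ p.rank x

lemma Pref.isBest_none_of_nothingAcceptable {p : Pref S} (h : NothingAcceptable p) :
    p.IsBest none
  | none => le_rfl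
  | some s => not_lt.1 (h s)

lemma studentOptimal_of_isBest {E : Prio I S} {P : I → Pref S} {ν : Matching I S}
    (hν : Feasible E ν) (hbest : ∀ j, (P j).IsBest (ν j)) : StudentOptimal E P ν :=
  ⟨⟨hν, fun j => hbest j none, fun j s hb => not_lt.2 (hbest j (some s)) hb.1⟩,
    fun _ _ j => hbest j _⟩

variable (A : S → Prop) [DecidablePred A] (p : Pref S)

lemma trunc_rank_of_goodB {x : Option S} (hx : goodB A x = true) :
    (trunc A p).rank x = p.rank x := by
  simp [trunc, hx]

lemma trunc_acceptable_iff (s : S) : (trunc A p).Acceptable s ↔ A s ∧ p.Acceptable s := by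
  by_cases h : A s
  · simp [Pref.Acceptable, trunc, goodB, h]
  · have := rank_lt_bnd p none
    simp only [Pref.Acceptable, trunc, goodB, h, decide_false, Bool.false_eq_true, ↓reduceIte,
      false_and, iff_false, not_lt]
    omega

variable {A p}

lemma nothingAcceptable_trunc (h : ∀ s, A s → ¬ p.Acceptable s) :
    NothingAcceptable (trunc A p) :=
  fun s hs => ((trunc_acceptable_iff A p s).1 hs).elim (h s)

lemma nothingAcceptable_trunc_false (p : Pref S) : NothingAcceptable (trunc (fun _ => False) p) :=
  nothingAcceptable_trunc fun _ h => h.elim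

lemma Pref.IsBest.trunc {o : Option S} (h : p.IsBest o) (ho : goodB A o = true) :
    (trunc A p).IsBest o := by
  intro x
  rw [trunc_rank_of_goodB A p ho]
  exact (h x).trans (Nat.le_add_left _ _)

def Pref.only (o : Option S) (p : Pref S) : Pref S where
  rank x := if x = o then 0 else if x = none then 1 else p.rank x + 2
  inj x y h := by
    simp only at h
    split_ifs at h <;> first | (subst_vars; rfl) | omega | exact p.inj (by omega)

lemma Pref.isBest_only (o : Option S) (p : Pref S) : (Pref.only o p).IsBest o := by
  intro x
  simp [Pref.only]

lemma Pref.onlyAcceptable_only (o : Option S) (p : Pref S) :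
    OnlyAcceptable (Pref.only o p) o := by
  intro s
  rcases o with _ | o
  · simp [Pref.only]
  · by_cases hs : s = o <;> simp [Pref.only, hs, eq_comm]

end Preferences

section TieredDA

variable {E : Prio I S} {t : S → ℕ} {Q : I → Pref S}

variable (E t Q) in
noncomputable def roundPref (k : ℕ) : I → Pref S := fun j =>
  if TDAaux E t Q k j = none then trunc (fun s => t s = k + 1) (Q j)
  else trunc (fun _ => False) (Q j)

lemma TDAaux_succ_of_eq_some {k : ℕ} {i : I} {s : S} (h : TDAaux E t Q k i = some s) :
    TDAaux E t Q (k + 1) i = some s := by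
  simp [TDAaux, h]

lemma TDAaux_succ_of_eq_none {k : ℕ} {i : I} (h : TDAaux E t Q k i = none) :
    TDAaux E t Q (k + 1) i = DA E (roundPref E t Q k) i := by
  simp only [TDAaux, h]
  rfl

lemma roundPref_of_eq_none {k : ℕ} {j : I} (h : TDAaux E t Q k j = none) :
    roundPref E t Q k j = trunc (fun s => t s = k + 1) (Q j) :=
  if_pos h

lemma roundPref_of_ne_none {k : ℕ} {j : I} (h : TDAaux E t Q k j ≠ none) :
    roundPref E t Q k j = trunc (fun _ => False) (Q j) :=
  if_neg h

lemma roundPref_acceptable_iff {k : ℕ} {j : I} {x : S} :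
    (roundPref E t Q k j).Acceptable x ↔
      TDAaux E t Q k j = none ∧ t x = k + 1 ∧ (Q j).Acceptable x := by
  by_cases h : TDAaux E t Q k j = none
  · simp [roundPref_of_eq_none h, trunc_acceptable_iff, h]
  · simp [roundPref_of_ne_none h, trunc_acceptable_iff, h]

lemma DA_roundPref_eq_some {k : ℕ} {i : I} {s : S} (h : DA E (roundPref E t Q k) i = some s) :
    TDAaux E t Q k i = none ∧ t s = k + 1 ∧ (Q i).Acceptable s :=
  roundPref_acceptable_iff.1 ((DA_stable E _).acceptable_of_eq_some h)

lemma TDAaux_mono {k k' : ℕ} (hk : k ≤ k') {i : I} {s : S} (h : TDAaux E t Q k i = some s) :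
    TDAaux E t Q k' i = some s := by
  induction k', hk using Nat.le_induction with
  | base => exact h
  | succ _ _ ih => exact TDAaux_succ_of_eq_some ih

lemma TDAaux_eq_none_of_le {k k' : ℕ} (hk : k ≤ k') {i : I} (h : TDAaux E t Q k' i = none) :
    TDAaux E t Q k i = none := by
  cases hki : TDAaux E t Q k i with
  | none => rfl
  | some s => simp [TDAaux_mono hk hki] at h

lemma TDAaux_eq_some_iff {k : ℕ} {i : I} {s : S} :
    TDAaux E t Q k i = some s ↔
      ∃ r < k, TDAaux E t Q r i = none ∧ DA E (roundPref E t Q r) i = some s := by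
  refine ⟨fun h => ?_, fun ⟨r, hr, hnone, hDA⟩ =>
    TDAaux_mono hr (by rw [TDAaux_succ_of_eq_none hnone, hDA])⟩
  induction k with
  | zero => simp [TDAaux] at h
  | succ k ih =>
    cases hk : TDAaux E t Q k i with
    | none => exact ⟨k, k.lt_succ_self, hk, by rwa [← TDAaux_succ_of_eq_none hk]⟩
    | some s' =>
      rw [TDAaux_succ_of_eq_some hk] at h
      obtain ⟨r, hr, hr'⟩ := ih (h ▸ hk)
      exact ⟨r, hr.trans k.lt_succ_self, hr'⟩

lemma acceptable_of_TDAaux_eq_some {k : ℕ} {i : I} {s : S} (h : TDAaux E t Q k i = some s) :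
    (Q i).Acceptable s := by
  obtain ⟨r, -, -, hDA⟩ := TDAaux_eq_some_iff.1 h
  exact (DA_roundPref_eq_some hDA).2.2

lemma TDAaux_eq_none_of_nothingAcceptable {i : I} (h : NothingAcceptable (Q i)) (k : ℕ) :
    TDAaux E t Q k i = none :=
  Option.eq_none_iff_forall_ne_some.2 fun s hs => h s (acceptable_of_TDAaux_eq_some hs)

lemma assigned_TDA {s : S} {r : ℕ} (hr : t s = r + 1) :
    assigned (TDA E t Q) s = assigned (DA E (roundPref E t Q r)) s := by
  ext j
  simp only [mem_assigned, TDA, TDAaux_eq_some_iff]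
  constructor
  · rintro ⟨r', -, -, hDA⟩
    obtain rfl : r' = r := by have := (DA_roundPref_eq_some hDA).2.1; omega
    exact hDA
  · intro hDA
    have : t s ≤ Finset.univ.sup t := Finset.le_sup (Finset.mem_univ s)
    exact ⟨r, by omega, (DA_roundPref_eq_some hDA).1, hDA⟩

end TieredDA

section NashOutcomesAreStable

variable {E : Prio I S} {t : S → ℕ} {Q : I → Pref S} {R : I → Pref S}

lemma not_blocks_of_filledBy {μ : Matching I S} {i : I} {s : S}
    (h : FilledBy E μ s (E.higher s · i)) : ¬ Blocks E R μ i s := by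
  rintro ⟨-, hlt | ⟨j, hj, hij⟩⟩
  · exact hlt.ne h.1
  · exact lt_asymm (h.2 j (mem_assigned.2 hj)) hij

lemma feasible_TDA (hts : ∀ s, 1 ≤ t s) : Feasible E (TDA E t Q) := by
  intro s
  rw [assigned_TDA (show t s = t s - 1 + 1 by have := hts s; omega)]
  exact (DA_stable E _).1 s

lemma indivRat_TDA_of_nashEq (hQ : NashEq R (TDA E t) Q) : IndivRat R (TDA E t Q) := by
  intro i
  have hnone : TDA E t (Function.update Q i (trunc (fun _ => False) (R i))) i = none :=
    TDAaux_eq_none_of_nothingAcceptable (by simpa using nothingAcceptable_trunc_false (R i)) _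
  simpa [hnone] using hQ i (trunc (fun _ => False) (R i))

lemma emptying_roundPref {Q' : I → Pref S} {i : I} (hQ : ∀ j, j ≠ i → Q' j = Q j) {m : ℕ}
    (hact : ∀ j, j ≠ i → TDAaux E t Q' m j = none → TDAaux E t Q m j = none)
    {π : I → Pref S} (hπ : ∀ j, j ≠ i → π j = roundPref E t Q' m j)
    (hπi : NothingAcceptable (π i)) : Emptying π (roundPref E t Q m) := by
  intro j
  rcases eq_or_ne j i with rfl | hj
  · exact Or.inr hπi
  rw [hπ j hj]
  by_cases h : TDAaux E t Q' m j = none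
  · left
    rw [roundPref_of_eq_none h, roundPref_of_eq_none (hact j hj h), hQ j hj]
  · exact Or.inr (roundPref_of_ne_none h ▸ nothingAcceptable_trunc_false _)

/-- In these rounds `i` is absent from the deviated market, which is therefore an emptying
of the original one. -/
lemma TDAaux_eq_none_of_update {i : I} {q : Pref S} {r : ℕ}
    (hq : ∀ x, t x ≤ r → ¬ q.Acceptable x) {m : ℕ} (hm : m ≤ r) {j : I} (hj : j ≠ i)
    (h : TDAaux E t (Function.update Q i q) m j = none) : TDAaux E t Q m j = none := by
  set Q' := Function.update Q i q
  have hQ : ∀ j, j ≠ i → Q' j = Q j := fun j hj => Function.update_of_ne hj _ _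
  induction m generalizing j with
  | zero => rfl
  | succ m ih =>
    have h' := TDAaux_eq_none_of_le m.le_succ h
    have hQm := ih (by omega) hj h'
    rw [TDAaux_succ_of_eq_none hQm]
    rw [TDAaux_succ_of_eq_none h'] at h
    have hE : Emptying (roundPref E t Q' m) (roundPref E t Q m) :=
      emptying_roundPref hQ (fun j hj => ih (by omega) hj) (fun _ _ => rfl) fun x hx => by
        obtain ⟨-, htx, hx⟩ := roundPref_acceptable_iff.1 hx
        exact hq x (by omega) (by simpa [Q'] using hx)
    have hjm : roundPref E t Q' m j = roundPref E t Q m j := by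
      rw [roundPref_of_eq_none h', roundPref_of_eq_none hQm, hQ j hj]
    refine Option.eq_none_iff_forall_ne_some.2 fun x hx => ?_
    have hcs := rank_DA_le_of_emptying hE (DA_stable E _) hjm
    rw [h, hx] at hcs
    exact not_le.2 ((DA_stable E _).acceptable_of_eq_some hx) hcs

lemma TDA_update_only_eq_none (hQ : NashEq R (TDA E t) Q) {i : I} {s : S}
    (hpref : (R i).rank (some s) < (R i).rank (TDA E t Q i)) :
    TDA E t (Function.update Q i (Pref.only (some s) (R i))) i = none := by
  refine Option.eq_none_iff_forall_ne_some.2 fun x hx => ?_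
  have hx' : (Pref.only (some s) (R i)).Acceptable x := by
    simpa using acceptable_of_TDAaux_eq_some hx
  cases (Pref.onlyAcceptable_only _ _ x).1 hx'
  exact not_le.2 hpref (hx ▸ hQ i _)

lemma not_blocks_TDA_of_nashEq (hts : ∀ s, 1 ≤ t s) (hacyc : WithinTierAcyclic E t)
    (hQ : NashEq R (TDA E t) Q) (i : I) (s : S) : ¬ Blocks E R (TDA E t Q) i s := by
  intro hblock
  obtain ⟨r, hr⟩ : ∃ r, t s = r + 1 := ⟨t s - 1, by have := hts s; omega⟩
  set q := Pref.only (some s) (R i)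
  set Q' := Function.update Q i q
  have hq : OnlyAcceptable q (some s) := Pref.onlyAcceptable_only _ _
  have hout : TDA E t Q' i = none := TDA_update_only_eq_none hQ hblock.1
  have hsup : t s ≤ Finset.univ.sup t := Finset.le_sup (Finset.mem_univ s)
  have hir : TDAaux E t Q' r i = none := TDAaux_eq_none_of_le (by omega) hout
  have hDAi : DA E (roundPref E t Q' r) i = none := by
    rw [← TDAaux_succ_of_eq_none hir]
    exact TDAaux_eq_none_of_le (by omega) hout
  have hs : q.Acceptable s := (hq s).2 rfl
  have hfilled : FilledBy E (DA E (roundPref E t Q' r)) s (E.higher s · i) :=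
    (DA_stable E _).filledBy_of_prefers <| by
      rw [hDAi]
      exact roundPref_acceptable_iff.2 ⟨hir, hr, by simpa [Q'] using hs⟩
  -- Removing `i` from this round keeps `s` filled above him, and the resulting market is an
  -- emptying of the same round of the original run.
  have hwithout := hfilled.DA_update_nothingAcceptable (hacyc (r + 1))
    (fun j x hx => (roundPref_acceptable_iff.1 hx).2.1) (nothingAcceptable_trunc_false (R i))
    hDAi hr
  have hE : Emptying (Function.update (roundPref E t Q' r) i (trunc (fun _ => False) (R i)))
      (roundPref E t Q r) :=
    emptying_roundPref (fun j hj => Function.update_of_ne hj _ _)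
      (fun j hj => TDAaux_eq_none_of_update (fun x hx hacc => by cases (hq x).1 hacc; omega)
        le_rfl hj)
      (fun j hj => Function.update_of_ne hj _ _) (by simpa using nothingAcceptable_trunc_false _)
  have hμ := hwithout.DA_of_emptying hE
  rw [FilledBy, ← assigned_TDA hr] at hμ
  exact not_blocks_of_filledBy hμ hblock

lemma stable_of_nashEq (hts : ∀ s, 1 ≤ t s) (hacyc : WithinTierAcyclic E t)
    (hQ : NashEq R (TDA E t) Q) : Stable E R (TDA E t Q) :=
  ⟨feasible_TDA hts, indivRat_TDA_of_nashEq hQ, not_blocks_TDA_of_nashEq hts hacyc hQ⟩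

end NashOutcomesAreStable

section StableMatchingsAreNashOutcomes

variable {E : Prio I S} {t : S → ℕ} {Q R : I → Pref S} {μ : Matching I S}

lemma Feasible.filter (hμ : Feasible E μ) (p : S → Bool) :
    Feasible E fun j => (μ j).filter p := fun s =>
  (Finset.card_le_card fun j hj => by simp_all [Option.filter_eq_some_iff]).trans (hμ s)

lemma isBest_roundPref (hbest : ∀ j, (Q j).IsBest (μ j))
    (honly : ∀ j, OnlyAcceptable (Q j) (μ j)) {k : ℕ}
    (hk : TDAaux E t Q k = fun j => (μ j).filter (t · ≤ k)) (j : I) :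
    (roundPref E t Q k j).IsBest ((μ j).filter (t · = k + 1)) := by
  have hTj := congrFun hk j
  cases hj : μ j with
  | none =>
    rw [hj, Option.filter_none] at hTj
    rw [roundPref_of_eq_none hTj, Option.filter_none]
    exact (hj ▸ hbest j).trunc rfl
  | some x =>
    rw [hj] at hTj
    by_cases hx : t x ≤ k
    · rw [roundPref_of_ne_none (by simp [hTj, hx]), Option.filter_some,
        if_neg (by simp only [decide_eq_true_eq]; omega)]
      exact Pref.isBest_none_of_nothingAcceptable (nothingAcceptable_trunc_false _)
    rw [roundPref_of_eq_none (by rw [hTj, Option.filter_some, if_neg (by simpa using hx)]), Option.filter_some]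
    by_cases hx' : t x = k + 1
    · rw [if_pos (by simpa using hx')]
      exact (hj ▸ hbest j).trunc (by simpa [goodB] using hx')
    · rw [if_neg (by simpa using hx')]
      refine Pref.isBest_none_of_nothingAcceptable (nothingAcceptable_trunc fun y hy hacc => ?_)
      cases (hj ▸ honly j y).1 hacc
      exact hx' hy

/-- In round `k + 1` everybody gets his favourite option: his `μ`-school if it lies in tier
`k + 1`, and `none` otherwise. -/
lemma TDAaux_eq_filter (hts : ∀ s, 1 ≤ t s) (hμ : Feasible E μ)
    (hbest : ∀ j, (Q j).IsBest (μ j)) (honly : ∀ j, OnlyAcceptable (Q j) (μ j)) (k : ℕ) :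
    TDAaux E t Q k = fun j => (μ j).filter (t · ≤ k) := by
  induction k with
  | zero =>
    funext j
    cases hj : μ j with
    | none => rfl
    | some x =>
      have := hts x
      rw [Option.filter_some, if_neg (by simp only [decide_eq_true_eq]; omega)]
      rfl
  | succ k ih =>
    have hround : DA E (roundPref E t Q k) = fun j => (μ j).filter (t · = k + 1) :=
      (DA_studentOptimal E _).unique
        (studentOptimal_of_isBest (hμ.filter _) (isBest_roundPref hbest honly ih))
    funext j
    have hTj := congrFun ih j
    cases hk : TDAaux E t Q k j with
    | some x =>
      rw [TDAaux_succ_of_eq_some hk]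
      rw [hk, eq_comm, Option.filter_eq_some_iff, decide_eq_true_eq] at hTj
      simp only [hTj.1, Option.filter_some, decide_eq_true_eq]
      rw [if_pos (by omega)]
    | none =>
      rw [TDAaux_succ_of_eq_none hk, hround]
      dsimp only
      cases hj : μ j with
      | none => rfl
      | some x =>
        simp only [hk, hj, Option.filter_some, decide_eq_true_eq] at hTj
        have : ¬ t x ≤ k := fun h => by simp [h] at hTj
        simp only [Option.filter_some, decide_eq_true_eq]
        by_cases hx : t x = k + 1
        · rw [if_pos hx, if_pos (by omega)]
        · rw [if_neg hx, if_neg (by omega)]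

lemma TDA_eq_of_onlyAcceptable (hts : ∀ s, 1 ≤ t s) (hμ : Feasible E μ)
    (hbest : ∀ j, (Q j).IsBest (μ j)) (honly : ∀ j, OnlyAcceptable (Q j) (μ j)) :
    TDA E t Q = μ := by
  funext j
  rw [TDA, TDAaux_eq_filter hts hμ hbest honly]
  dsimp only
  cases hj : μ j with
  | none => rfl
  | some x =>
    have : t x ≤ Finset.univ.sup t := Finset.le_sup (Finset.mem_univ x)
    rw [Option.filter_some, if_pos (by simpa using this)]

lemma TDAaux_eq_none_of_onlyAcceptable {j : I} {s : S} (hj : OnlyAcceptable (Q j) (some s))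
    {r : ℕ} (hr : t s = r + 1) : TDAaux E t Q r j = none := by
  refine Option.eq_none_iff_forall_ne_some.2 fun x hx => ?_
  obtain ⟨r', hr', -, hDA⟩ := TDAaux_eq_some_iff.1 hx
  obtain ⟨-, htx, hacc⟩ := DA_roundPref_eq_some hDA
  cases (hj x).1 hacc
  omega

/-- A deviation that wins a seat at `s` in round `r + 1` would leave out a student of
`μ(s)` who is still in the market and ranks `s` first, and who has priority over the
deviator since `μ` is stable. -/
lemma nashEq_of_onlyAcceptable (hμ : Stable E R μ) (honly : ∀ j, OnlyAcceptable (Q j) (μ j))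
    (hTDA : TDA E t Q = μ) : NashEq R (TDA E t) Q := by
  intro i q
  rw [hTDA]
  set Q' := Function.update Q i q
  cases hout : TDA E t Q' i with
  | none => exact hμ.2.1 i
  | some s =>
  by_contra! hpref
  obtain ⟨r, -, -, hDAi⟩ := TDAaux_eq_some_iff.1 hout
  have hr := (DA_roundPref_eq_some hDAi).2.1
  have hfilled := hμ.filledBy_of_prefers hpref
  set ν := DA E (roundPref E t Q' r)
  have hν : Stable E (roundPref E t Q' r) ν := DA_stable E _
  obtain ⟨j, hjμ, hjν⟩ : ∃ j ∈ assigned μ s, j ∉ assigned ν s := by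
    by_contra! hsub
    have hi : i ∉ assigned μ s := fun h => by
      rw [mem_assigned.1 h] at hpref
      exact lt_irrefl _ hpref
    have := Finset.card_le_card (Finset.insert_subset (mem_assigned.2 hDAi) hsub)
    rw [Finset.card_insert_of_notMem hi, hfilled.1] at this
    exact absurd (hν.1 s) (by omega)
  have hji : j ≠ i := fun h => hjν (h ▸ mem_assigned.2 hDAi)
  have honlyj : OnlyAcceptable (Q' j) (some s) := by
    simpa [Q', Function.update_of_ne hji, mem_assigned.1 hjμ] using honly j
  have hνj : ν j = none := by
    refine Option.eq_none_iff_forall_ne_some.2 fun x hx => ?_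
    cases (honlyj x).1 (DA_roundPref_eq_some hx).2.2
    exact hjν (mem_assigned.2 hx)
  refine hν.2.2 j s ⟨?_, Or.inr ⟨i, hDAi, hfilled.2 j hjμ⟩⟩
  rw [hνj]
  exact roundPref_acceptable_iff.2
    ⟨TDAaux_eq_none_of_onlyAcceptable honlyj hr, hr, (honlyj s).2 rfl⟩

lemma nashOutcome_of_stable (hts : ∀ s, 1 ≤ t s) (hμ : Stable E R μ) :
    NashOutcome R (TDA E t) μ := by
  have honly : ∀ j, OnlyAcceptable (Pref.only (μ j) (R j)) (μ j) :=
    fun j => Pref.onlyAcceptable_only _ _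
  have hTDA := TDA_eq_of_onlyAcceptable hts hμ.1 (fun j => Pref.isBest_only _ _) honly
  exact ⟨_, nashEq_of_onlyAcceptable hμ honly hTDA, hTDA⟩

end StableMatchingsAreNashOutcomes

lemma nashOutcome_TDA_iff_stable {E : Prio I S} {t : S → ℕ} (hts : ∀ s, 1 ≤ t s)
    (hacyc : WithinTierAcyclic E t) (R : I → Pref S) (μ : Matching I S) :
    NashOutcome R (TDA E t) μ ↔ Stable E R μ := by
  constructor
  · rintro ⟨Q, hQ, rfl⟩
    exact stable_of_nashEq hts hacyc hQ
  · exact nashOutcome_of_stable hts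

/-- If `(q, ≿, t)` and `(q, ≿, t')` are both within-tier acyclic, then
for every preference profile the Nash equilibrium outcome sets of TDA under `t` and under
`t'` coincide, and both equal the set of stable matchings. -/
theorem withinTierAcyclic_TDA_outcomes_coincide
    (E : Prio I S) (t t' : S → ℕ) (T T' : ℕ)
    (ht : IsTierStructure t T) (ht' : IsTierStructure t' T')
    (h1 : WithinTierAcyclic E t) (h2 : WithinTierAcyclic E t')
    (R : I → Pref S) :
    (∀ μ, NashOutcome R (TDA E t) μ ↔ Stable E R μ) ∧
    (∀ μ, NashOutcome R (TDA E t') μ ↔ Stable E R μ) :=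
  ⟨nashOutcome_TDA_iff_stable (fun s => (ht.1 s).1) h1 R,
    nashOutcome_TDA_iff_stable (fun s => (ht'.1 s).1) h2 R⟩

end SchoolChoice
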